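/- Suppose q is prime, p' ≥ 1 is coprime to q, and (p' : G) ∈ N_{p,q}. Then N_{p·p',q} ≤ N_{p,q}; consequently H_{p,q} = G ⧸ N_{p,q} is a quotient of H_{p·p',q} = G ⧸ N_{p·p',q}. -/

import Mathlib

/-!
Off the multiples of `q`, multiplication by `p'` intertwines the two maps: for `q ∤ c` we have
`q ∤ p' c` (as `q` is prime), and `C_{p p', q}(c) = p p' c + 1 = C_{p, q}(p' c)`. Hence the generator
`c / C_{p p', q}(c) = (p' c / C_{p, q}(p' c)) · p'⁻¹` of `N_{p p', q}` lies in `N_{p, q}` as soon as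
`p'` does, while the generators `c / (c / q) = q` are common to both subgroups.
-/

abbrev G : Type := {x : ℚ // 0 < x}

def toG (c : ℕ+) : G := ⟨(c : ℚ), by exact_mod_cast c.pos⟩

def Cmap (p q : ℕ+) (c : ℕ+) : ℕ+ :=
  if h : (q : ℕ) ∣ (c : ℕ) then
    ⟨(c : ℕ) / (q : ℕ), Nat.div_pos (Nat.le_of_dvd c.pos h) q.pos⟩
  else p * c + 1

def E (p q : ℕ+) : ℕ+ → ℕ+ → Prop := Relation.EqvGen (fun c d => d = Cmap p q c)

def Npq (p q : ℕ+) : Subgroup G :=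
  Subgroup.closure ({toG q} ∪ {x : G | ∃ c d : ℕ+, E p q c d ∧ x = toG c / toG d})

theorem Subgroup.div_mem_of_eqvGen {α M : Type*} [Group M] (H : Subgroup M) (f : α → M)
    {r : α → α → Prop} (hr : ∀ a b, r a b → f a / f b ∈ H) {a b : α}
    (hab : Relation.EqvGen r a b) : f a / f b ∈ H := by
  induction hab with
  | rel a b h => exact hr a b h
  | refl a => simp
  | symm a b _ ih => simpa using H.inv_mem ih
  | trans a b c _ _ ihab ihbc => simpa using H.mul_mem ihab ihbc

theorem toG_mul (a b : ℕ+) : toG (a * b) = toG a * toG b :=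
  Subtype.ext (by simp [toG])

theorem coe_cmap_of_dvd (p q c : ℕ+) (hc : (q : ℕ) ∣ (c : ℕ)) :
    (Cmap p q c : ℕ) = c / q := by
  simp [Cmap, hc]

theorem cmap_of_not_dvd (p q c : ℕ+) (hc : ¬ (q : ℕ) ∣ (c : ℕ)) : Cmap p q c = p * c + 1 :=
  dif_neg hc

theorem toG_div_toG_cmap_of_dvd (p q c : ℕ+) (hc : (q : ℕ) ∣ (c : ℕ)) :
    toG c / toG (Cmap p q c) = toG q := by
  have hc' : c = q * Cmap p q c :=
    PNat.eq (by rw [PNat.mul_coe, coe_cmap_of_dvd p q c hc, Nat.mul_div_cancel' hc])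
  rw [hc', toG_mul, ← hc', mul_div_cancel_right]

theorem cmap_mul_of_not_dvd (p p' q c : ℕ+) (hq : (q : ℕ).Prime)
    (hcop : ¬ (q : ℕ) ∣ (p' : ℕ)) (hc : ¬ (q : ℕ) ∣ (c : ℕ)) :
    Cmap (p * p') q c = Cmap p q (p' * c) := by
  have hp'c : ¬ (q : ℕ) ∣ ((p' * c : ℕ+) : ℕ) := by
    rw [PNat.mul_coe, hq.dvd_mul]
    exact not_or.mpr ⟨hcop, hc⟩
  rw [cmap_of_not_dvd _ _ _ hc, cmap_of_not_dvd _ _ _ hp'c, mul_assoc]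

theorem toG_right_mem_Npq (p q : ℕ+) : toG q ∈ Npq p q :=
  Subgroup.subset_closure (Or.inl rfl)

theorem toG_div_mem_Npq_of_E (p q : ℕ+) {c d : ℕ+} (hcd : E p q c d) :
    toG c / toG d ∈ Npq p q :=
  Subgroup.subset_closure (Or.inr ⟨c, d, hcd, rfl⟩)

theorem Npq_mul_le (p p' q : ℕ+) (hq : (q : ℕ).Prime) (hcop : ¬ (q : ℕ) ∣ (p' : ℕ))
    (h : toG p' ∈ Npq p q) : Npq (p * p') q ≤ Npq p q := by
  rw [Npq, Subgroup.closure_le]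
  rintro x (rfl | ⟨c, d, hcd, rfl⟩)
  · exact toG_right_mem_Npq p q
  refine (Npq p q).div_mem_of_eqvGen toG ?_ hcd
  rintro c _ rfl
  by_cases hc : (q : ℕ) ∣ (c : ℕ)
  · rw [toG_div_toG_cmap_of_dvd _ _ _ hc]
    exact toG_right_mem_Npq p q
  · have hstep : toG c / toG (Cmap (p * p') q c)
        = toG (p' * c) / toG (Cmap p q (p' * c)) * (toG p')⁻¹ := by
      rw [cmap_mul_of_not_dvd p p' q c hq hcop hc, toG_mul, mul_div_assoc, mul_inv_cancel_comm]
    rw [hstep]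
    exact mul_mem (toG_div_mem_Npq_of_E p q (.rel _ _ rfl)) (inv_mem h)

theorem stmt12_general (p p' q : ℕ+) (hq : (q : ℕ).Prime)
    (hcop : ¬ (q : ℕ) ∣ (p' : ℕ)) (h : toG p' ∈ Npq p q) :
    Npq (p * p') q ≤ Npq p q ∧
      ∃ f : (G ⧸ Npq (p * p') q) →* (G ⧸ Npq p q), Function.Surjective f := by
  have hle := Npq_mul_le p p' q hq hcop h
  exact ⟨hle, QuotientGroup.map _ _ (MonoidHom.id G) hle,
    QuotientGroup.map_surjective_of_surjective _ _ (MonoidHom.id G) QuotientGroup.mk_surjective hle⟩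

theorem stmt12 (p p' q : ℕ+) (hp : 1 ≤ p) (hp' : 1 ≤ p') (hq : (q : ℕ).Prime)
    (hcop : ¬ (q : ℕ) ∣ (p' : ℕ)) (h : toG p' ∈ Npq p q) :
    Npq (p * p') q ≤ Npq p q ∧
      ∃ f : (G ⧸ Npq (p * p') q) →* (G ⧸ Npq p q), Function.Surjective f :=
  stmt12_general p p' q hq hcop h
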